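/- arXiv:2605.09805 — 3 statements merged into one kernel-verified Lean document; each statement's English description precedes it below -/
import Mathlib

section
/- Let f: ℝ × ℝ → ℝ be continuous and assume there exist constants x₀, δ, c ≥ 0 such that f(x,y) ≥ δ for all x, y ≥ x₀ and f(x,y) ≥ -c for all x, y ∈ ℝ. Let t₀ ≥ 0 and let d, u: [t₀, ∞) → ℝ be continuous with d(t) ≤ δ for all t ≥ t₀. If z: [t₀-1, ∞) → ℝ is continuous with z(t₀) ≤ x₀ and satisfies z(t) = z(t₀) + ∫_{t₀}^t [-f(z(s-1), z(s)) + d(s)] ds + u(t) - u(t₀) for all t ≥ t₀, then for every t ≥ t₀ there exists a ∈ [t₀, t] such that z(t) ≤ max{x₀, x₀ + c + δ + u(t) - u(a)}. -/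
/-!
Let `a` be the last time in `[t₀, t]` with `z a ≤ x₀`, so that `z > x₀` on `(a, t]`. Writing the
equation between `a` and `t`, the integrand `-f(z(s-1), z(s)) + d(s)` is at most `c + δ`
everywhere, and at most `0` once `s > a + 1`, because then both arguments of `f` exceed `x₀`.
Hence the integral over `[a, t]` is at most `c + δ`, and `z t ≤ x₀ + c + δ + u t - u a`.
-/

open MeasureTheory intervalIntegral Set

theorem exists_mem_Icc_le_forall_Ioc_lt {z : ℝ → ℝ} {p t x₀ : ℝ}
    (hz : ContinuousOn z (Icc p t)) (hpt : p ≤ t) (hzp : z p ≤ x₀) :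
    ∃ a ∈ Icc p t, z a ≤ x₀ ∧ ∀ s ∈ Ioc a t, x₀ < z s := by
  have hS : IsCompact (Icc p t ∩ z ⁻¹' Iic x₀) :=
    isCompact_Icc.of_isClosed_subset (hz.preimage_isClosed_of_isClosed isClosed_Icc isClosed_Iic)
      inter_subset_left
  obtain ⟨a, ⟨ha, hza⟩, hgreatest⟩ := hS.exists_isGreatest ⟨p, ⟨le_rfl, hpt⟩, hzp⟩
  refine ⟨a, ha, hza, fun s ⟨has, hst⟩ => lt_of_not_ge fun hzs => ?_⟩
  exact (hgreatest ⟨⟨ha.1.trans has.le, hst⟩, hzs⟩).not_gt has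

theorem integral_le_mul_of_nonpos_after {g : ℝ → ℝ} {a t τ M : ℝ}
    (hg : IntervalIntegrable g volume a t) (hat : a ≤ t) (hτ : 0 ≤ τ) (hM : 0 ≤ M)
    (hgM : ∀ s ∈ Ioo a t, g s ≤ M) (hg_nonpos : ∀ s ∈ Ioo (a + τ) t, g s ≤ 0) :
    ∫ s in a..t, g s ≤ τ * M := by
  set m := min (a + τ) t
  have ham : a ≤ m := le_min (by linarith) hat
  have hmt : m ≤ t := min_le_right _ _
  have hm : m ∈ uIcc a t := by rw [uIcc_of_le hat]; exact ⟨ham, hmt⟩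
  have hg₁ : IntervalIntegrable g volume a m := hg.mono_set (uIcc_subset_uIcc_left hm)
  have hg₂ : IntervalIntegrable g volume m t := hg.mono_set (uIcc_subset_uIcc_right hm)
  have h₁ : ∫ s in a..m, g s ≤ (m - a) * M := by
    simpa using integral_mono_on_of_le_Ioo ham hg₁ intervalIntegrable_const
      fun s hs => hgM s ⟨hs.1, hs.2.trans_le hmt⟩
  have h₂ : ∫ s in m..t, g s ≤ 0 := by
    simpa using integral_mono_on_of_le_Ioo hmt hg₂ intervalIntegrable_const
      fun s hs => hg_nonpos s ⟨(min_lt_iff.mp hs.1).resolve_right hs.2.not_gt, hs.2⟩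
  have hma : (m - a) * M ≤ τ * M :=
    mul_le_mul_of_nonneg_right (by linarith [min_le_left (a + τ) t]) hM
  rw [← integral_add_adjacent_intervals hg₁ hg₂]
  linarith

theorem stmt_4_general (f : ℝ × ℝ → ℝ) (hf : Continuous f)
    (x₀ δ c : ℝ) (hδ : 0 ≤ δ) (hc : 0 ≤ c)
    (hfδ : ∀ x y : ℝ, x₀ ≤ x → x₀ ≤ y → δ ≤ f (x, y))
    (hfc : ∀ x y : ℝ, -c ≤ f (x, y))
    (t₀ : ℝ)
    (d u : ℝ → ℝ) (hd : ContinuousOn d (Set.Ici t₀))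
    (hdδ : ∀ t, t₀ ≤ t → d t ≤ δ)
    (z : ℝ → ℝ) (hz : ContinuousOn z (Set.Ici (t₀ - 1)))
    (hz0 : z t₀ ≤ x₀)
    (heq : ∀ t, t₀ ≤ t →
      z t = z t₀ + (∫ s in t₀..t, (-(f (z (s - 1), z s)) + d s)) + u t - u t₀) :
    ∀ t, t₀ ≤ t → ∃ a ∈ Set.Icc t₀ t,
      z t ≤ max x₀ (x₀ + c + δ + (u t - u a)) := by
  intro t ht
  set g : ℝ → ℝ := fun s => -(f (z (s - 1), z s)) + d s
  have hz_Icc : ContinuousOn z (Icc t₀ t) := hz.mono (Icc_subset_Ici_iff ht |>.mpr (by linarith))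
  have hg : ContinuousOn g (Icc t₀ t) := by
    have hz_shift : ContinuousOn (fun s => z (s - 1)) (Icc t₀ t) :=
      hz.comp (continuousOn_id.sub continuousOn_const) fun s hs => by
        simp only [mem_Ici]; linarith [hs.1]
    exact (hf.comp_continuousOn (hz_shift.prodMk hz_Icc)).neg.add (hd.mono Icc_subset_Ici_self)
  have hgi : IntervalIntegrable g volume t₀ t := hg.intervalIntegrable_of_Icc ht
  obtain ⟨a, ⟨hta, hat⟩, hza, hz_gt⟩ := exists_mem_Icc_le_forall_Ioc_lt hz_Icc ht hz0
  have ha : a ∈ uIcc t₀ t := by rw [uIcc_of_le ht]; exact ⟨hta, hat⟩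
  have hg_le : ∀ s ∈ Ioo a t, g s ≤ c + δ := fun s hs => by
    linarith [hfc (z (s - 1)) (z s), hdδ s (hta.trans hs.1.le)]
  have hg_nonpos : ∀ s ∈ Ioo (a + 1) t, g s ≤ 0 := fun s hs => by
    have hδf := hfδ _ _ (hz_gt (s - 1) ⟨by linarith [hs.1], by linarith [hs.2]⟩).le
      (hz_gt s ⟨by linarith [hs.1], hs.2.le⟩).le
    linarith [hdδ s (by linarith [hs.1])]
  have hint : ∫ s in a..t, g s ≤ 1 * (c + δ) :=
    integral_le_mul_of_nonpos_after (hgi.mono_set (uIcc_subset_uIcc_right ha)) hat zero_le_one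
      (add_nonneg hc hδ) hg_le hg_nonpos
  have hsplit : (∫ s in t₀..t, g s) - ∫ s in t₀..a, g s = ∫ s in a..t, g s :=
    integral_interval_sub_left hgi (hgi.mono_set (uIcc_subset_uIcc_left ha))
  exact ⟨a, ⟨hta, hat⟩, le_max_of_le_right (by linarith [heq t ht, heq a hta])⟩

theorem stmt_4 (f : ℝ × ℝ → ℝ) (hf : Continuous f)
    (x₀ δ c : ℝ) (hx₀ : 0 ≤ x₀) (hδ : 0 ≤ δ) (hc : 0 ≤ c)
    (hfδ : ∀ x y : ℝ, x₀ ≤ x → x₀ ≤ y → δ ≤ f (x, y))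
    (hfc : ∀ x y : ℝ, -c ≤ f (x, y))
    (t₀ : ℝ) (ht₀ : 0 ≤ t₀)
    (d u : ℝ → ℝ) (hd : ContinuousOn d (Set.Ici t₀)) (hu : ContinuousOn u (Set.Ici t₀))
    (hdδ : ∀ t, t₀ ≤ t → d t ≤ δ)
    (z : ℝ → ℝ) (hz : ContinuousOn z (Set.Ici (t₀ - 1)))
    (hz0 : z t₀ ≤ x₀)
    (heq : ∀ t, t₀ ≤ t →
      z t = z t₀ + (∫ s in t₀..t, (-(f (z (s - 1), z s)) + d s)) + u t - u t₀) :
    ∀ t, t₀ ≤ t → ∃ a ∈ Set.Icc t₀ t,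
      z t ≤ max x₀ (x₀ + c + δ + (u t - u a)) :=
  stmt_4_general f hf x₀ δ c hδ hc hfδ hfc t₀ d u hd hdδ z hz hz0 heq
end

section
/- Let α, β₁ > 0 and R ≥ 0. Then for every natural number l, ∑_{k=0}^{l-1} exp(-(αk + R)²/(8β₁²(k+1))) ≤ exp(-R²/(8β₁²)) + exp(-αR/(8β₁²)) / (1 - exp(-α²/(16β₁²))). -/
open Real Finset

theorem stmt_7 (α β₁ R : ℝ) (hα : 0 < α) (hβ₁ : 0 < β₁) (hR : 0 ≤ R) :
    ∀ l : ℕ, ∑ k ∈ Finset.range l,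
        Real.exp (-((α * k + R) ^ 2) / (8 * β₁ ^ 2 * (k + 1)))
      ≤ Real.exp (-(R ^ 2) / (8 * β₁ ^ 2)) +
          Real.exp (-(α * R) / (8 * β₁ ^ 2)) / (1 - Real.exp (-(α ^ 2) / (16 * β₁ ^ 2))) := by
  intro l
  set r := Real.exp (-(α ^ 2) / (16 * β₁ ^ 2)) with hrdef
  set c := Real.exp (-(α * R) / (8 * β₁ ^ 2)) with hcdef
  have hr0 : 0 < r := Real.exp_pos _
  have hr1 : r < 1 := by
    rw [hrdef, Real.exp_lt_one_iff]
    apply div_neg_of_neg_of_pos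
    · nlinarith
    · positivity
  have hc0 : 0 < c := Real.exp_pos _
  have hden : 0 < 1 - r := by linarith
  cases l with
  | zero =>
    simp only [Finset.range_zero, Finset.sum_empty]
    positivity
  | succ n =>
    rw [Finset.sum_range_succ']
    have h0 : Real.exp (-((α * (0:ℕ) + R) ^ 2) / (8 * β₁ ^ 2 * ((0:ℕ) + 1)))
        = Real.exp (-(R ^ 2) / (8 * β₁ ^ 2)) := by
      norm_num
    rw [h0]
    have hsum : ∑ k ∈ Finset.range n,
        Real.exp (-((α * (k + 1 : ℕ) + R) ^ 2) / (8 * β₁ ^ 2 * ((k + 1 : ℕ) + 1)))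
        ≤ c / (1 - r) := by
      calc ∑ k ∈ Finset.range n,
            Real.exp (-((α * (k + 1 : ℕ) + R) ^ 2) / (8 * β₁ ^ 2 * ((k + 1 : ℕ) + 1)))
          ≤ ∑ k ∈ Finset.range n, c * r ^ k := by
            apply Finset.sum_le_sum
            intro k _
            push_cast
            set m : ℝ := (k : ℝ) + 1 with hm
            have hm1 : (1:ℝ) ≤ m := by rw [hm]; linarith [(Nat.cast_nonneg k : (0:ℝ) ≤ k)]
            have hrk : c * r ^ k = Real.exp (-(α * R) / (8 * β₁ ^ 2) + (k:ℝ) * (-(α ^ 2) / (16 * β₁ ^ 2))) := by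
              rw [hcdef, hrdef, Real.exp_add, ← Real.exp_nat_mul]
            rw [hrk, Real.exp_le_exp]
            have hk0 : (0:ℝ) ≤ (k:ℝ) := Nat.cast_nonneg k
            have hkm : (k:ℝ) = m - 1 := by rw [hm]; ring
            rw [hkm, mul_comm (m - 1) (-(α ^ 2) / (16 * β₁ ^ 2)), div_mul_eq_mul_div,
              div_add_div _ _ (by positivity) (by positivity),
              div_le_div_iff₀ (by positivity) (by positivity)]
            have hcore : 0 ≤ α ^ 2 * (m ^ 2 + 1) + 2 * α * R * (m - 1) + 2 * R ^ 2 := by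
              nlinarith [sq_nonneg R, mul_nonneg (sq_nonneg α) (sq_nonneg m), sq_nonneg α,
                mul_nonneg (mul_nonneg hα.le hR) (sub_nonneg.2 hm1)]
            nlinarith [mul_nonneg (sq_nonneg β₁) hcore, sq_nonneg β₁,
              mul_pos (mul_pos hβ₁ hβ₁) (mul_pos hβ₁ hβ₁)]
          _ = c * ∑ k ∈ Finset.range n, r ^ k := by rw [Finset.mul_sum]
          _ ≤ c * (1 - r)⁻¹ := by
            apply mul_le_mul_of_nonneg_left _ hc0.le
            have := Summable.sum_le_tsum (Finset.range n) (fun i _ => by positivity)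
              (summable_geometric_of_lt_one hr0.le hr1)
            rwa [tsum_geometric_of_lt_one hr0.le hr1] at this
          _ = c / (1 - r) := by rw [div_eq_mul_inv]
    linarith
end

section
/- Let σ, p > 0. Then for every natural number m, ∑_{l=0}^m 4·exp(-(q² + 2pql + p²l²)/(64σ²(l+1))) ≤ 4·exp(-q²/(64σ²)) + 4·exp(-pq/(64σ²)) / (1 - exp(-p²/(128σ²))) for every q > 0. -/
open Real Finset

theorem stmt_8 (σ p : ℝ) (hσ : 0 < σ) (hp : 0 < p) :
    ∀ m : ℕ, ∀ q : ℝ, 0 < q →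
      ∑ l ∈ Finset.range (m + 1),
          4 * Real.exp (-(q ^ 2 + 2 * p * q * l + p ^ 2 * l ^ 2) / (64 * σ ^ 2 * (l + 1)))
        ≤ 4 * Real.exp (-(q ^ 2) / (64 * σ ^ 2)) +
            4 * Real.exp (-(p * q) / (64 * σ ^ 2)) /
              (1 - Real.exp (-(p ^ 2) / (128 * σ ^ 2))) := by
  intro m q hq
  set r : ℝ := Real.exp (-(p ^ 2) / (128 * σ ^ 2)) with hr
  have hσ2 : (0:ℝ) < σ ^ 2 := by positivity
  have hr0 : 0 < r := Real.exp_pos _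
  have hr1 : r < 1 := by
    have hpos : 0 < p ^ 2 / (128 * σ ^ 2) := by positivity
    rw [hr, Real.exp_lt_one_iff, neg_div]
    linarith
  have h1r : 0 < 1 - r := by linarith
  set E : ℝ := Real.exp (-(p * q) / (64 * σ ^ 2)) with hE
  have hE0 : 0 < E := Real.exp_pos _
  rw [Finset.sum_range_succ']
  have h0 : 4 * Real.exp (-(q ^ 2 + 2 * p * q * (0:ℕ) + p ^ 2 * (0:ℕ) ^ 2) /
      (64 * σ ^ 2 * ((0:ℕ) + 1))) = 4 * Real.exp (-(q ^ 2) / (64 * σ ^ 2)) := by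
    norm_num
  rw [h0]
  have key : ∀ l ∈ Finset.range m,
      4 * Real.exp (-(q ^ 2 + 2 * p * q * (l + 1 : ℕ) + p ^ 2 * (l + 1 : ℕ) ^ 2) /
        (64 * σ ^ 2 * ((l + 1 : ℕ) + 1))) ≤ 4 * E * r ^ (l + 1) := by
    intro l _
    set L : ℝ := (l : ℝ) + 1 with hL
    clear_value L
    have hL1 : (1:ℝ) ≤ L := by
      rw [hL]
      exact le_add_of_nonneg_left (Nat.cast_nonneg l)
    have hpoly : -(q ^ 2 + 2 * p * q * L + p ^ 2 * L ^ 2) ≤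
        (-(p * q) - L * p ^ 2 / 2) * (L + 1) := by
      nlinarith [sq_nonneg q, mul_nonneg (mul_pos hp hq).le (by linarith : (0:ℝ) ≤ L - 1),
        mul_nonneg (mul_nonneg (sq_nonneg p) (by linarith : (0:ℝ) ≤ L))
          (by linarith : (0:ℝ) ≤ L - 1)]
    have hterm : -(q ^ 2 + 2 * p * q * L + p ^ 2 * L ^ 2) / (64 * σ ^ 2 * (L + 1)) ≤
        -(p * q) / (64 * σ ^ 2) + L * (-(p ^ 2) / (128 * σ ^ 2)) := by
      have hcomb : -(p * q) / (64 * σ ^ 2) + L * (-(p ^ 2) / (128 * σ ^ 2)) =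
          (-(p * q) - L * p ^ 2 / 2) / (64 * σ ^ 2) := by
        field_simp
        ring
      rw [hcomb, div_le_div_iff₀ (by positivity) (by positivity)]
      calc -(q ^ 2 + 2 * p * q * L + p ^ 2 * L ^ 2) * (64 * σ ^ 2)
          ≤ ((-(p * q) - L * p ^ 2 / 2) * (L + 1)) * (64 * σ ^ 2) :=
            mul_le_mul_of_nonneg_right hpoly (by positivity)
        _ = (-(p * q) - L * p ^ 2 / 2) * (64 * σ ^ 2 * (L + 1)) := by ring
    calc 4 * Real.exp (-(q ^ 2 + 2 * p * q * (l + 1 : ℕ) + p ^ 2 * (l + 1 : ℕ) ^ 2) /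
            (64 * σ ^ 2 * ((l + 1 : ℕ) + 1)))
        ≤ 4 * Real.exp (-(p * q) / (64 * σ ^ 2) + L * (-(p ^ 2) / (128 * σ ^ 2))) := by
          gcongr
          · rw [hL] at hterm ⊢
            push_cast
            exact hterm
      _ = 4 * E * r ^ (l + 1) := by
          rw [Real.exp_add, hE, hr, ← Real.exp_nat_mul, hL]
          push_cast
          ring_nf
  have hsum : ∑ l ∈ Finset.range m,
      4 * Real.exp (-(q ^ 2 + 2 * p * q * (l + 1 : ℕ) + p ^ 2 * (l + 1 : ℕ) ^ 2) /
        (64 * σ ^ 2 * ((l + 1 : ℕ) + 1))) ≤ ∑ l ∈ Finset.range m, 4 * E * r ^ (l + 1) :=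
    Finset.sum_le_sum key
  have hgeom : ∑ l ∈ Finset.range m, 4 * E * r ^ (l + 1) ≤ 4 * E / (1 - r) := by
    have hg : ∑ l ∈ Finset.range m, r ^ l ≤ 1 / (1 - r) := by
      rw [geom_sum_eq (ne_of_lt hr1)]
      have heq : (r ^ m - 1) / (r - 1) = (1 - r ^ m) / (1 - r) := by
        rw [← neg_div_neg_eq]
        ring_nf
      rw [heq, div_le_div_iff₀ h1r h1r]
      have hrm : 0 ≤ r ^ m := pow_nonneg hr0.le m
      nlinarith
    calc ∑ l ∈ Finset.range m, 4 * E * r ^ (l + 1)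
        = 4 * E * r * ∑ l ∈ Finset.range m, r ^ l := by
          rw [Finset.mul_sum]; apply Finset.sum_congr rfl; intro l _; ring
      _ ≤ 4 * E * r * (1 / (1 - r)) :=
          mul_le_mul_of_nonneg_left hg (by positivity)
      _ ≤ 4 * E / (1 - r) := by
          rw [mul_one_div, div_le_div_iff₀ h1r h1r]
          nlinarith [mul_nonneg hE0.le (sq_nonneg (1 - r))]
  linarith
end
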